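/- arXiv:2108.11813 — 4 statements merged into one kernel-verified Lean document; each statement's English description precedes it below -/
import Mathlib

section
/- Let 1 < p < n, p ≤ q < p*·n/(p(n+1)), τ₁ > n/p, and τ₂ ≥ q/(q−1), with p* = np/(n−p). Define ϑ = min{1 − (p*)'/q', 1 − 1/τ₁, 1 − (p*)'/τ₂}. Then p/p* < ϑ, hence ϑ·(p*/p) > 1. -/
theorem stmt_10 (n : ℕ) (hn : 2 ≤ n) (p q τ₁ τ₂ : ℝ) (hp1 : 1 < p) (hpn : p < n)
    (pstar : ℝ) (hpstar : pstar = n * p / (n - p))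
    (hpq : p ≤ q) (hq : q < pstar * n / (p * (n + 1)))
    (hτ₁ : τ₁ > n / p) (hτ₂ : τ₂ ≥ q / (q - 1))
    (ϑ : ℝ)
    (hϑ : ϑ = min (min (1 - (pstar / (pstar - 1)) / (q / (q - 1))) (1 - 1 / τ₁))
      (1 - (pstar / (pstar - 1)) / τ₂)) :
    p / pstar < ϑ ∧ 1 < ϑ * (pstar / p) := by
  have hN : (2:ℝ) ≤ (n:ℝ) := by exact_mod_cast hn
  have hp0 : (0:ℝ) < p := by linarith
  have hnp : (0:ℝ) < (n:ℝ) - p := by linarith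
  have hN0 : (0:ℝ) < (n:ℝ) := by linarith
  have hps0 : 0 < pstar := by rw [hpstar]; positivity
  have hrel : pstar * ((n:ℝ) - p) = (n:ℝ) * p := by
    rw [hpstar]; field_simp
  have hps1 : 1 < pstar := by nlinarith
  have hq1 : 1 < q := lt_of_lt_of_le hp1 hpq
  have hq0 : 0 < q := by linarith
  have hqm1 : 0 < q - 1 := by linarith
  have hτ₂0 : 0 < τ₂ := lt_of_lt_of_le (by positivity) hτ₂
  -- key inequality from hq : q * (n - p) * (n + 1) < n ^ 2
  have key : q * ((n:ℝ) - p) * ((n:ℝ) + 1) < (n:ℝ) ^ 2 := by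
    rw [lt_div_iff₀ (by positivity)] at hq
    nlinarith [hq, hrel, hp0]
  have h1 : p / pstar < 1 - (pstar / (pstar - 1)) / (q / (q - 1)) := by
    rw [hpstar]
    have hd : (0:ℝ) < (n:ℝ)*p - ((n:ℝ)-p) := by nlinarith
    have e1 : (n:ℝ)*p/((n:ℝ)-p) - 1 = ((n:ℝ)*p - ((n:ℝ)-p))/((n:ℝ)-p) := by
      rw [sub_div, div_self hnp.ne']
    rw [e1]
    have e2 : ((n:ℝ)*p/((n:ℝ)-p)) / (((n:ℝ)*p - ((n:ℝ)-p))/((n:ℝ)-p))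
        = (n:ℝ)*p/((n:ℝ)*p - ((n:ℝ)-p)) := by
      rw [div_div_div_cancel_right₀]
      exact hnp.ne'
    have e3 : p / ((n:ℝ)*p/((n:ℝ)-p)) = ((n:ℝ)-p)/(n:ℝ) := by
      rw [div_div_eq_mul_div, div_eq_div_iff (by positivity) (by positivity)]
      ring
    rw [e2, e3, div_div_eq_mul_div]
    have e4 : 1 - (n:ℝ) * p / ((n:ℝ) * p - ((n:ℝ) - p)) * (q - 1) / q
        = (((n:ℝ)*p - ((n:ℝ) - p))*q - (n:ℝ)*p*(q-1)) / (((n:ℝ)*p - ((n:ℝ) - p))*q) := by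
      field_simp
    rw [e4, div_lt_div_iff₀ (by positivity) (by positivity)]
    nlinarith [mul_lt_mul_of_pos_right key hp0]
  have h2 : p / pstar < 1 - 1 / τ₁ := by
    have hτ₁0 : 0 < τ₁ := lt_trans (by positivity) hτ₁
    have hpp : p / pstar = 1 - p / (n:ℝ) := by
      rw [hpstar]; field_simp
    have hnt : (n:ℝ) < τ₁ * p := by
      have := (div_lt_iff₀ hp0).mp hτ₁; linarith
    have : 1 / τ₁ < p / (n:ℝ) := by
      rw [div_lt_div_iff₀ hτ₁0 hN0]; linarith
    linarith [hpp, this]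
  have h3 : p / pstar < 1 - (pstar / (pstar - 1)) / τ₂ := by
    have hle : (pstar / (pstar - 1)) / τ₂ ≤ (pstar / (pstar - 1)) / (q / (q - 1)) := by
      apply div_le_div_of_nonneg_left _ (by positivity) hτ₂
      have : 0 < pstar - 1 := by linarith
      positivity
    linarith
  have hmain : p / pstar < ϑ := by
    rw [hϑ]
    exact lt_min (lt_min h1 h2) h3
  refine ⟨hmain, ?_⟩
  have h1' : p / pstar * (pstar / p) = 1 := by field_simp
  calc (1:ℝ) = p / pstar * (pstar / p) := h1'.symm
    _ < ϑ * (pstar / p) := mul_lt_mul_of_pos_right hmain (by positivity)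
end

section
/- Let n ≥ 2, p ≥ 2, z ∈ ℝ^{n×n}, u ∈ ℝ^n with u ≠ 0, and h : ℝ → ℝ convex, differentiable, bounded from below. Define A_i^α(z) = p|z|^{p−2} z_i^α + h'(det z)(Cof z)_i^α, where |z| is the Frobenius norm. Then the indicator function I_A = ∑_{i,α,β} A_i^α(z) z_i^β u^α u^β / |u|² satisfies I_A ≥ inf h − h(0). In particular I_A ≥ 0 whenever h(0) = inf h. -/
lemma tangent_aux (h : ℝ → ℝ) (hconv : ConvexOn ℝ Set.univ h)
    (hdiff : Differentiable ℝ h) (d : ℝ) :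
    h d - h 0 ≤ deriv h d * d := by
  rcases lt_trichotomy d 0 with hd | hd | hd
  · have := hconv.deriv_le_slope (Set.mem_univ d) (Set.mem_univ 0) hd (hdiff d)
    rw [slope_def_field] at this
    have h2 := mul_le_mul_of_nonpos_right this hd.le
    have h3 : (h 0 - h d) / (0 - d) * d = h d - h 0 := by
      rw [zero_sub, div_neg, neg_mul, div_mul_cancel₀ _ (ne_of_lt hd), neg_sub]
    linarith
  · simp [hd]
  · have := hconv.slope_le_deriv (Set.mem_univ 0) (Set.mem_univ d) hd (hdiff d)
    rw [slope_def_field] at this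
    have h2 : (h d - h 0) / (d - 0) * d ≤ deriv h d * d :=
      mul_le_mul_of_nonneg_right this hd.le
    rwa [sub_zero, div_mul_cancel₀ _ (ne_of_gt hd)] at h2

theorem stmt_12 (n : ℕ) (hn : 2 ≤ n) (p : ℝ) (hp : 2 ≤ p)
    (z : Matrix (Fin n) (Fin n) ℝ) (u : Fin n → ℝ) (hu : u ≠ 0)
    (h : ℝ → ℝ) (hconv : ConvexOn ℝ Set.univ h)
    (hdiff : Differentiable ℝ h) (hbdd : BddBelow (Set.range h))
    (Cof : Matrix (Fin n) (Fin n) ℝ)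
    (hCof : ∀ α β : Fin n, ∑ i, Cof α i * z β i = if α = β then z.det else 0)
    (A : Fin n → Fin n → ℝ)
    (hA : ∀ α i, A α i =
      p * (Real.sqrt (∑ γ, ∑ j, (z γ j) ^ 2)) ^ (p - 2) * z α i
        + deriv h z.det * Cof α i) :
    (∑ i, ∑ α, ∑ β, A α i * z β i * u α * u β) / (∑ α, (u α) ^ 2) ≥
      sInf (Set.range h) - h 0 := by
  set c : ℝ := p * (Real.sqrt (∑ γ, ∑ j, (z γ j) ^ 2)) ^ (p - 2) with hc
  set d : ℝ := z.det with hd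
  have hupos : 0 < ∑ α, (u α) ^ 2 := by
    rcases Function.ne_iff.mp hu with ⟨α, hα⟩
    have : 0 < u α ^ 2 := sq_pos_iff.mpr hα
    exact Finset.sum_pos' (fun i _ => sq_nonneg _) ⟨α, Finset.mem_univ α, this⟩
  have hcnn : 0 ≤ c := by
    exact mul_nonneg (by linarith) (Real.rpow_nonneg (Real.sqrt_nonneg _) _)
  have key : ∑ i, ∑ α, ∑ β, A α i * z β i * u α * u β
      = c * ∑ i, (∑ α, z α i * u α) ^ 2 + deriv h d * d * ∑ α, (u α) ^ 2 := by
    have e1 : ∀ i : Fin n, ∑ α, ∑ β, A α i * z β i * u α * u β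
        = c * (∑ α, z α i * u α) ^ 2
          + ∑ α, ∑ β, (deriv h d * Cof α i) * z β i * u α * u β := by
      intro i
      rw [sq, Finset.sum_mul_sum, Finset.mul_sum]
      rw [← Finset.sum_add_distrib]
      refine Finset.sum_congr rfl fun α _ => ?_
      rw [Finset.mul_sum, ← Finset.sum_add_distrib]
      refine Finset.sum_congr rfl fun β _ => ?_
      rw [hA]; ring
    simp only [e1, Finset.sum_add_distrib, ← Finset.mul_sum]
    congr 1
    rw [Finset.sum_comm]
    have e2 : ∀ α : Fin n, ∑ i : Fin n, ∑ β, (deriv h d * Cof α i) * z β i * u α * u β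
        = deriv h d * d * u α ^ 2 := by
      intro α
      rw [Finset.sum_comm]
      have e3 : ∀ β : Fin n, ∑ i, (deriv h d * Cof α i) * z β i * u α * u β
          = (if α = β then d else 0) * (deriv h d * u α * u β) := by
        intro β
        rw [← hCof α β, Finset.sum_mul]
        exact Finset.sum_congr rfl fun i _ => by ring
      simp only [e3, ite_mul, zero_mul, Finset.sum_ite_eq, Finset.mem_univ, if_true]
      ring
    rw [Finset.mul_sum]
    exact Finset.sum_congr rfl fun α _ => e2 α
  have hDlb : sInf (Set.range h) - h 0 ≤ deriv h d * d := by
    have h1 : sInf (Set.range h) ≤ h d := csInf_le hbdd ⟨d, rfl⟩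
    have h2 := tangent_aux h hconv hdiff d
    linarith
  have hS : deriv h d * d * (∑ α, (u α) ^ 2) ≤ ∑ i, ∑ α, ∑ β, A α i * z β i * u α * u β := by
    rw [key]
    have : 0 ≤ c * ∑ i, (∑ α, z α i * u α) ^ 2 := by positivity
    linarith
  have := (div_le_div_iff_of_pos_right hupos).mpr hS
  rw [mul_div_cancel_right₀ _ (ne_of_gt hupos)] at this
  exact le_trans hDlb this
end

section
/- Let n ≥ 2, p ≥ 2, z ∈ ℝ^{n×n}, and h : ℝ → ℝ convex, differentiable, bounded from below. Define A_i^α(z) = p|z|^{p−2} z_i^α + h'(det z)(Cof z)_i^α. Then for each α, ∑_{i=1}^n A_i^α(z) z_i^α ≥ p|z^α|^p − (h(0) − inf h), where z^α is the α-th row of z. -/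
lemma convex_deriv_mul_self (h : ℝ → ℝ) (hconv : ConvexOn ℝ Set.univ h)
    (hdiff : Differentiable ℝ h) (x : ℝ) : h x - h 0 ≤ deriv h x * x := by
  rcases lt_trichotomy x 0 with hx | hx | hx
  · have := hconv.deriv_le_slope (Set.mem_univ x) (Set.mem_univ 0) hx (hdiff x)
    rw [slope_def_field, le_div_iff₀ (by linarith)] at this
    nlinarith
  · simp [hx]
  · have := hconv.slope_le_deriv (Set.mem_univ 0) (Set.mem_univ x) hx (hdiff x)
    rw [slope_def_field, div_le_iff₀ (by linarith)] at this
    nlinarith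

theorem stmt_13 (n : ℕ) (hn : 2 ≤ n) (p : ℝ) (hp : 2 ≤ p)
    (z : Matrix (Fin n) (Fin n) ℝ)
    (h : ℝ → ℝ) (hconv : ConvexOn ℝ Set.univ h)
    (hdiff : Differentiable ℝ h) (hbdd : BddBelow (Set.range h))
    (Cof : Matrix (Fin n) (Fin n) ℝ)
    (hCof : ∀ α : Fin n, ∑ i, Cof α i * z α i = z.det)
    (A : Fin n → Fin n → ℝ)
    (hA : ∀ α i, A α i =
      p * (Real.sqrt (∑ γ, ∑ j, (z γ j) ^ 2)) ^ (p - 2) * z α i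
        + deriv h z.det * Cof α i) :
    ∀ α : Fin n, ∑ i, A α i * z α i ≥
      p * (Real.sqrt (∑ i, (z α i) ^ 2)) ^ p - (h 0 - sInf (Set.range h)) := by
  intro α
  set S := Real.sqrt (∑ γ, ∑ j, (z γ j) ^ 2) with hS
  set r := Real.sqrt (∑ i, (z α i) ^ 2) with hr
  have hsum : ∑ i, A α i * z α i
      = p * S ^ (p - 2) * (∑ i, (z α i) ^ 2) + deriv h z.det * z.det := by
    simp only [hA, add_mul]
    rw [Finset.sum_add_distrib]
    have h1 : ∑ x, p * S ^ (p - 2) * z α x * z α x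
        = p * S ^ (p - 2) * ∑ i, (z α i) ^ 2 := by
      rw [Finset.mul_sum]; exact Finset.sum_congr rfl fun i _ => by ring
    have h2 : ∑ x, deriv h z.det * Cof α x * z α x = deriv h z.det * z.det := by
      rw [← hCof α, Finset.mul_sum]; exact Finset.sum_congr rfl fun i _ => by ring
    rw [h1, h2]
  have hrow_nonneg : (0:ℝ) ≤ ∑ i, (z α i) ^ 2 :=
    Finset.sum_nonneg fun i _ => sq_nonneg _
  have hsq : ∑ i, (z α i) ^ 2 = r ^ 2 := (Real.sq_sqrt hrow_nonneg).symm
  have hrS : r ≤ S := by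
    apply Real.sqrt_le_sqrt
    exact Finset.single_le_sum (f := fun γ => ∑ j, (z γ j) ^ 2)
      (fun γ _ => Finset.sum_nonneg fun j _ => sq_nonneg _) (Finset.mem_univ α)
  have hrpow : r ^ (p - 2) ≤ S ^ (p - 2) :=
    Real.rpow_le_rpow (Real.sqrt_nonneg _) hrS (by linarith)
  have hsplit : r ^ p = r ^ (p - 2) * r ^ 2 := by
    have : r ^ p = r ^ (p - 2) * r ^ (2:ℝ) := by
      rw [← Real.rpow_add' (Real.sqrt_nonneg _) (by linarith)]
      norm_num
      rfl
    rw [this, Real.rpow_two]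
  have hmain : p * r ^ p ≤ p * S ^ (p - 2) * (∑ i, (z α i) ^ 2) := by
    rw [hsq, hsplit, ← mul_assoc]
    exact mul_le_mul_of_nonneg_right
      (mul_le_mul_of_nonneg_left hrpow (by linarith)) (sq_nonneg _)
  have hInf : sInf (Set.range h) ≤ h z.det := csInf_le hbdd ⟨z.det, rfl⟩
  have hder := convex_deriv_mul_self h hconv hdiff z.det
  rw [hsum]
  linarith
end

section
/- Fix n ≥ 1, m = 2, σ¹(x) = 18 + 2 sin(|x|²), σ²(x) = 2 + sin(|x|²), and A_i^α(x,z) = σ^α(x) z_i^α. Then Meier's weak condition fails: for every λ > 0, L > 0, and nonnegative functions d, g, there exist δ ∈ (0,1), x ∈ ℝⁿ, u ∈ ℝ² with |u| > L, and z ∈ ℝ^{2×n} such that ∑_{i,α,β} A_i^α(x,z) z_i^β u^α u^β/|u|² < −(δ|z|² + δ^{−λ}[d(x)|u|² + g(x)]). -/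
theorem stmt_15 (n : ℕ) (hn : 1 ≤ n)
    (σ : Fin 2 → (Fin n → ℝ) → ℝ)
    (hσ1 : ∀ x, σ 0 x = 18 + 2 * Real.sin (∑ i, (x i) ^ 2))
    (hσ2 : ∀ x, σ 1 x = 2 + Real.sin (∑ i, (x i) ^ 2))
    (A : (Fin n → ℝ) → Matrix (Fin 2) (Fin n) ℝ → Fin 2 → Fin n → ℝ)
    (hA : ∀ x z α i, A x z α i = σ α x * z α i)
    (lam L : ℝ) (hlam : 0 < lam) (hL : 0 < L)
    (d g : (Fin n → ℝ) → ℝ) (hd : ∀ x, 0 ≤ d x) (hg : ∀ x, 0 ≤ g x) :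
    ∃ δ : ℝ, δ ∈ Set.Ioo (0 : ℝ) 1 ∧ ∃ x : Fin n → ℝ, ∃ u : Fin 2 → ℝ,
      Real.sqrt (∑ α, (u α) ^ 2) > L ∧ ∃ z : Matrix (Fin 2) (Fin n) ℝ,
      (∑ i, ∑ α, ∑ β, A x z α i * z β i * u α * u β) / (∑ α, (u α) ^ 2) <
        -(δ * (∑ α, ∑ i, (z α i) ^ 2) + δ ^ (-lam) * (d x * (∑ α, (u α) ^ 2) + g x)) := by
  obtain ⟨c, hc⟩ : ∃ c : ℝ, c = ((1/2 : ℝ)) ^ (-lam) := ⟨_, rfl⟩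
  have hcpos : 0 < c := hc ▸ Real.rpow_pos_of_pos (by norm_num) _
  set x0 : Fin n → ℝ := fun _ => 0 with hx0
  have hd0 : 0 ≤ d x0 := hd x0
  have hg0 : 0 ≤ g x0 := hg x0
  obtain ⟨K, hK⟩ : ∃ K : ℝ, K = c * (2 * d x0 + g x0) := ⟨_, rfl⟩
  have hKnn : 0 ≤ K := by rw [hK]; positivity
  obtain ⟨s, hs⟩ : ∃ s : ℝ, s = 1 + L + K := ⟨_, rfl⟩
  have hs1 : 1 ≤ s := by rw [hs]; linarith
  have hsL : L < s := by rw [hs]; linarith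
  have hsK : K < s := by rw [hs]; linarith
  have hspos : 0 < s := by linarith
  refine ⟨1/2, ⟨by norm_num, by norm_num⟩, x0, (fun _ => s), ?_, ?_⟩
  · have h2 : (∑ α : Fin 2, ((fun _ : Fin 2 => s) α) ^ 2) = 2 * s ^ 2 := by
      rw [Fin.sum_univ_two]
      ring
    rw [h2]
    calc L < s := hsL
      _ = Real.sqrt (s ^ 2) := (Real.sqrt_sq hspos.le).symm
      _ ≤ Real.sqrt (2 * s ^ 2) := Real.sqrt_le_sqrt (by nlinarith)
  · set i0 : Fin n := ⟨0, hn⟩ with hi0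
    refine ⟨Matrix.of (fun α i => if i = i0 then (if α = 0 then -s^2 else 2*s^2) else 0), ?_⟩
    have hsin : Real.sin (∑ i : Fin n, (x0 i) ^ 2) = 0 := by
      simp [hx0]
    have hσ0 : σ 0 x0 = 18 := by rw [hσ1, hsin]; ring
    have hσ1' : σ 1 x0 = 2 := by rw [hσ2, hsin]; ring
    have hLHS : (∑ i, ∑ α, ∑ β,
        A x0 (Matrix.of (fun α i => if i = i0 then (if α = 0 then -s^2 else 2*s^2) else 0)) α i *
          (Matrix.of (fun α i => if i = i0 then (if α = 0 then -s^2 else 2*s^2) else 0)) β i *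
          (fun _ : Fin 2 => s) α * (fun _ : Fin 2 => s) β) = -14 * s^6 := by
      simp only [hA, Fin.sum_univ_two, Matrix.of_apply, hσ0, hσ1']
      rw [Finset.sum_eq_single i0]
      · simp
        ring
      · intro b _ hb
        simp [hb]
      · intro h; exact absurd (Finset.mem_univ i0) h
    rw [hLHS]
    have hZ : (∑ α, ∑ i,
        ((Matrix.of (fun α i => if i = i0 then (if α = 0 then -s^2 else 2*s^2) else 0) : Matrix (Fin 2) (Fin n) ℝ) α i) ^ 2)
        = 5 * s^4 := by
      simp only [Fin.sum_univ_two, Matrix.of_apply,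
        show ((0:Fin 2) = 0) = True by simp, show ((1:Fin 2) = 0) = False by simp,
        if_true, if_false, ite_pow, zero_pow (by norm_num : (2:ℕ) ≠ 0)]
      rw [Finset.sum_ite_eq' Finset.univ i0, Finset.sum_ite_eq' Finset.univ i0]
      simp only [Finset.mem_univ, if_true]
      ring
    have hU : (∑ α : Fin 2, ((fun _ : Fin 2 => s) α) ^ 2) = 2 * s ^ 2 := by
      rw [Fin.sum_univ_two]
      ring
    rw [hZ, hU, div_lt_iff₀ (by positivity), ← hc]
    have hd0c : 0 ≤ c * d x0 := mul_nonneg hcpos.le hd0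
    have hg0c : 0 ≤ c * g x0 := mul_nonneg hcpos.le hg0
    have hs4 : 0 < s ^ 4 := by positivity
    have e1 : K * s ^ 4 < s ^ 5 := by nlinarith
    have e2 : s ^ 5 ≤ s ^ 6 := by nlinarith [pow_pos hspos 5]
    have e24 : s ^ 2 ≤ s ^ 4 := by nlinarith [pow_pos hspos 2]
    have e3 : 4 * (c * d x0) * s ^ 4 + 2 * (c * g x0) * s ^ 2 ≤ 2 * K * s ^ 4 := by
      rw [hK]; nlinarith [mul_le_mul_of_nonneg_left e24 hg0c]
    nlinarith [e1, e2, e3, pow_pos hspos 6]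
end
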